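/- Let θ, θ^W > 0 and define J̃_s(x) = (1/s!) θ^{(s+1)/2} ∫_{−∞}^{0} (2π θ^W)^{−1/2} exp(−|√θ y − x|²/(2θ^W)) He_s(y) dy for s ≥ 0, with the convention J̃_{−1} ≡ 0, and define H_s(x) = (1/s!) √(θ^W/(2π)) θ^{(s−1)/2} He_{s−1}(0) exp(−x²/(2θ^W)). Then for every integer s ≥ 1 and all x ∈ ℝ, J̃_s(x) = (1/s)[(θ^W − θ) J̃_{s−2}(x) + x J̃_{s−1}(x)] − H_s(x). -/

import Mathlib

/-!
Write `h_n = He_n / n!` (zero for `n < 0`) and `g(y) = exp(-(√θ y - x)² / (2θ^W))`, so that `J̃_n`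
is a multiple of `∫_{-∞}^0 g h_n`. Integrating the derivative of `g h_{s-1}` over `(-∞, 0]`, with
`g' = -(√θ (√θ y - x) / θ^W) g`, `h_{s-1}' = h_{s-2}` and the three-term recurrence
`y h_{s-1} = s h_s + h_{s-2}`, gives the recursion; the boundary term at `0` is `H_s(x)`.
-/

open MeasureTheory Real

/-- Probabilists' Hermite polynomial `He n x`, with the convention `He n ≡ 0` for `n < 0`. -/
noncomputable def He (n : ℤ) (x : ℝ) : ℝ :=
  if n < 0 then 0 else Polynomial.aeval x (Polynomial.hermite n.toNat)

/-- `J̃_s(x) = (1/s!) θ^{(s+1)/2} ∫_{−∞}^0 (2πθ^W)^{−1/2} exp(−|√θ y − x|²/(2θ^W)) He_s(y) dy`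
for `s ≥ 0`, with the convention `J̃_s ≡ 0` for `s < 0`. -/
noncomputable def Jt (θ θW : ℝ) (s : ℤ) (x : ℝ) : ℝ :=
  if s < 0 then 0 else
    (1 / (Nat.factorial s.toNat)) * θ ^ (((s : ℝ) + 1) / 2) *
      ∫ y in Set.Iio (0 : ℝ), (2 * Real.pi * θW) ^ (-(1 : ℝ) / 2) *
        Real.exp (-(Real.sqrt θ * y - x) ^ 2 / (2 * θW)) * He s y

/-- `H_s(x) = (1/s!) √(θ^W/(2π)) θ^{(s−1)/2} He_{s−1}(0) exp(−x²/(2θ^W))`. -/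
noncomputable def HH (θ θW : ℝ) (s : ℕ) (x : ℝ) : ℝ :=
  (1 / (Nat.factorial s)) * Real.sqrt (θW / (2 * Real.pi)) *
    θ ^ (((s : ℝ) - 1) / 2) * He ((s : ℤ) - 1) 0 * Real.exp (-x ^ 2 / (2 * θW))

open Polynomial Set
open scoped Nat

namespace Polynomial

theorem derivative_hermite_succ (n : ℕ) :
    derivative (hermite (n + 1)) = (n + 1 : ℤ[X]) * hermite n := by
  induction n with
  | zero => simp [hermite_zero]
  | succ n ih =>
    rw [hermite_succ (n + 1), derivative_sub, derivative_mul, derivative_X, ih,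
      derivative_mul, hermite_succ n]
    push_cast
    simp only [derivative_add, derivative_natCast, derivative_one]
    ring

/-- `hermite n / n!` over `ℝ`, and `0` for `n < 0`: with this normalization `h_n' = h_{n-1}` and
`X h_n = (n + 1) h_{n+1} + h_{n-1}` hold for every `n : ℤ`. -/
noncomputable def hermiteNorm (n : ℤ) : ℝ[X] :=
  if n < 0 then 0 else C ((n.toNat ! : ℝ)⁻¹) * (hermite n.toNat).map (Int.castRingHom ℝ)

theorem hermiteNorm_of_neg {n : ℤ} (hn : n < 0) : hermiteNorm n = 0 := if_pos hn

theorem hermiteNorm_natCast (n : ℕ) :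
    hermiteNorm n = C ((n ! : ℝ)⁻¹) * (hermite n).map (Int.castRingHom ℝ) := by
  simp [hermiteNorm]

theorem derivative_hermiteNorm (n : ℤ) : derivative (hermiteNorm n) = hermiteNorm (n - 1) := by
  rcases lt_or_ge n 0 with hn | hn
  · rw [hermiteNorm_of_neg hn, hermiteNorm_of_neg (by omega), derivative_zero]
  obtain ⟨m, rfl⟩ := Int.eq_ofNat_of_zero_le hn
  cases m with
  | zero =>
    rw [hermiteNorm_natCast, hermiteNorm_of_neg (by omega)]
    simp [hermite_zero]
  | succ m =>
    rw [hermiteNorm_natCast, show ((m + 1 : ℕ) : ℤ) - 1 = m by omega, hermiteNorm_natCast,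
      derivative_C_mul, derivative_map, derivative_hermite_succ, Polynomial.map_mul]
    have hc : C (((m + 1)! : ℝ)⁻¹) * ((m : ℝ[X]) + 1) = C ((m ! : ℝ)⁻¹) := by
      rw [← C_eq_natCast, ← C_1, ← C_add, ← C_mul, Nat.factorial_succ]
      push_cast
      field_simp
    simp only [Polynomial.map_add, Polynomial.map_natCast, Polynomial.map_one]
    linear_combination map (Int.castRingHom ℝ) (hermite m) * hc

theorem X_mul_hermiteNorm (n : ℤ) :
    X * hermiteNorm n = C ((n : ℝ) + 1) * hermiteNorm (n + 1) + hermiteNorm (n - 1) := by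
  rcases lt_or_ge n 0 with hn | hn
  · rw [hermiteNorm_of_neg hn, hermiteNorm_of_neg (by omega : n - 1 < 0)]
    rcases eq_or_lt_of_le (Int.add_one_le_iff.mpr hn) with h | h
    · simp [show (n : ℝ) = -1 by exact_mod_cast (by omega : n = -1)]
    · simp [hermiteNorm_of_neg h]
  obtain ⟨m, rfl⟩ := Int.eq_ofNat_of_zero_le hn
  rw [← derivative_hermiteNorm, show (m : ℤ) + 1 = ((m + 1 : ℕ) : ℤ) by omega,
    hermiteNorm_natCast, hermiteNorm_natCast, derivative_C_mul, derivative_map, hermite_succ]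
  have hc : C ((m : ℝ) + 1) * C (((m + 1)! : ℝ)⁻¹) = C ((m ! : ℝ)⁻¹) := by
    rw [← C_mul, Nat.factorial_succ]
    push_cast
    field_simp
  simp only [Polynomial.map_sub, Polynomial.map_mul, map_X]
  push_cast
  linear_combination -(X * map (Int.castRingHom ℝ) (hermite m)
    - map (Int.castRingHom ℝ) (derivative (hermite m))) * hc

theorem mul_eval_hermiteNorm_sub_one (n : ℤ) (y : ℝ) :
    y * (hermiteNorm (n - 1)).eval y =
      n * (hermiteNorm n).eval y + (hermiteNorm (n - 2)).eval y := by
  have h := congrArg (eval y) (X_mul_hermiteNorm (n - 1))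
  rw [sub_add_cancel, sub_sub, one_add_one_eq_two] at h
  simpa only [eval_mul, eval_add, eval_X, eval_C, Int.cast_sub, Int.cast_one, sub_add_cancel]
    using h

theorem eval_hermiteNorm (n : ℤ) (y : ℝ) : (hermiteNorm n).eval y = He n y / n.toNat ! := by
  rcases lt_or_ge n 0 with hn | hn
  · simp [hermiteNorm_of_neg hn, He, hn]
  · simp [hermiteNorm, He, not_lt.mpr hn, aeval_def, eval_map, div_eq_inv_mul]

end Polynomial

theorem integrable_eval_mul_exp_neg_mul_sq {b : ℝ} (hb : 0 < b) (p : ℝ[X]) :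
    Integrable fun y : ℝ => p.eval y * Real.exp (-b * y ^ 2) := by
  induction p using Polynomial.induction_on' with
  | add p q hp hq =>
    simp only [eval_add, add_mul]
    exact hp.add hq
  | monomial k c =>
    have hk : Integrable fun y : ℝ => y ^ k * Real.exp (-b * y ^ 2) := by
      simpa only [Real.rpow_natCast] using
        integrable_rpow_mul_exp_neg_mul_sq hb (neg_one_lt_zero.trans_le k.cast_nonneg)
    simpa only [eval_monomial, mul_assoc] using hk.const_mul c

noncomputable def shiftedGaussian (a x v y : ℝ) : ℝ := Real.exp (-(a * y - x) ^ 2 / (2 * v))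

section ShiftedGaussian

variable {a x v : ℝ}

theorem hasDerivAt_shiftedGaussian (y : ℝ) :
    HasDerivAt (shiftedGaussian a x v)
      (-(a * (a * y - x) / v) * shiftedGaussian a x v y) y := by
  have h : HasDerivAt (fun y => -(a * y - x) ^ 2 / (2 * v)) (-(a * (a * y - x) / v)) y := by
    refine ((((hasDerivAt_id' y).const_mul a).sub_const x).fun_pow 2).fun_neg.div_const (2 * v)
      |>.congr_deriv ?_
    push_cast
    ring
  rw [mul_comm]
  exact h.exp

theorem integrable_shiftedGaussian_mul_eval (ha : a ≠ 0) (hv : 0 < v) (p : ℝ[X]) :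
    Integrable fun y => shiftedGaussian a x v y * p.eval y := by
  have hshift : ∀ y, shiftedGaussian a x v y * p.eval y =
      (p.comp (X + C (x / a))).eval (y - x / a) *
        Real.exp (-(a ^ 2 / (2 * v)) * (y - x / a) ^ 2) := by
    intro y
    simp only [shiftedGaussian, eval_comp, eval_add, eval_X, eval_C, sub_add_cancel]
    rw [mul_comm]
    congr 2
    field_simp
  simpa only [hshift] using
    (integrable_eval_mul_exp_neg_mul_sq (by positivity) _).comp_sub_right (x / a)

theorem integral_Iic_shiftedGaussian_mul_eval (ha : a ≠ 0) (hv : 0 < v) (p : ℝ[X]) (t : ℝ) :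
    ∫ y in Iic t, shiftedGaussian a x v y *
        ((derivative p).eval y - a * (a * y - x) / v * p.eval y) =
      shiftedGaussian a x v t * p.eval t := by
  have hderiv : ∀ y, HasDerivAt (fun y => shiftedGaussian a x v y * p.eval y)
      (shiftedGaussian a x v y * ((derivative p).eval y - a * (a * y - x) / v * p.eval y)) y :=
    fun y => ((hasDerivAt_shiftedGaussian y).mul (p.hasDerivAt y)).congr_deriv (by ring)
  have hint : Integrable fun y => shiftedGaussian a x v y *
      ((derivative p).eval y - a * (a * y - x) / v * p.eval y) := by
    refine (integrable_shiftedGaussian_mul_eval (x := x) ha hv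
      (derivative p - C (a / v) * (C a * X - C x) * p)).congr (ae_of_all _ fun y => ?_)
    simp only [eval_sub, eval_mul, eval_C, eval_X]
    ring
  have hlim := tendsto_zero_of_hasDerivAt_of_integrableOn_Iic (a := t) (fun y _ => hderiv y)
    hint.integrableOn (integrable_shiftedGaussian_mul_eval ha hv p).integrableOn
  simpa using integral_Iic_of_hasDerivAt_of_tendsto' (fun y _ => hderiv y) hint.integrableOn hlim

theorem integral_Iic_shiftedGaussian_mul_hermiteNorm_recurrence (ha : a ≠ 0) (hv : 0 < v)
    (n : ℤ) (t : ℝ) :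
    a ^ 2 * n * ∫ y in Iic t, shiftedGaussian a x v y * (hermiteNorm n).eval y =
      (v - a ^ 2) * (∫ y in Iic t, shiftedGaussian a x v y * (hermiteNorm (n - 2)).eval y) +
        a * x * (∫ y in Iic t, shiftedGaussian a x v y * (hermiteNorm (n - 1)).eval y) -
        v * shiftedGaussian a x v t * (hermiteNorm (n - 1)).eval t := by
  have ibp := integral_Iic_shiftedGaussian_mul_eval (x := x) ha hv (hermiteNorm (n - 1)) t
  have hintegrand : ∀ y, shiftedGaussian a x v y * ((derivative (hermiteNorm (n - 1))).eval y -
      a * (a * y - x) / v * (hermiteNorm (n - 1)).eval y) =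
      v⁻¹ * ((v - a ^ 2) * (shiftedGaussian a x v y * (hermiteNorm (n - 2)).eval y) -
        a ^ 2 * n * (shiftedGaussian a x v y * (hermiteNorm n).eval y) +
        a * x * (shiftedGaussian a x v y * (hermiteNorm (n - 1)).eval y)) := by
    intro y
    rw [derivative_hermiteNorm, sub_sub, one_add_one_eq_two]
    have hrec := mul_eval_hermiteNorm_sub_one n y
    field_simp
    linear_combination (-(a ^ 2) * shiftedGaussian a x v y) * hrec
  have hint : ∀ k, IntegrableOn (fun y => shiftedGaussian a x v y * (hermiteNorm k).eval y)
      (Iic t) := fun k => (integrable_shiftedGaussian_mul_eval ha hv _).integrableOn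
  simp_rw [hintegrand] at ibp
  rw [integral_const_mul, integral_add, integral_sub, integral_const_mul, integral_const_mul,
    integral_const_mul] at ibp
  · field_simp at ibp
    linear_combination -ibp
  all_goals first
    | exact (hint _).const_mul _
    | exact ((hint _).const_mul _).sub ((hint _).const_mul _)

end ShiftedGaussian

theorem mul_rpow_neg_half {v c : ℝ} (hv : 0 < v) (hc : 0 < c) :
    v * (c * v) ^ (-(1 : ℝ) / 2) = √(v / c) := by
  rw [neg_div, Real.rpow_neg (by positivity), ← Real.sqrt_eq_rpow, Real.sqrt_mul hc.le,
    Real.sqrt_div hv.le]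
  have hv' : √v ≠ 0 := by positivity
  have hc' : √c ≠ 0 := by positivity
  field_simp
  rw [Real.sq_sqrt hv.le]

theorem Jt_eq_integral_shiftedGaussian (θ θW x : ℝ) (k : ℤ) :
    Jt θ θW k x = θ ^ (((k : ℝ) + 1) / 2) * (2 * π * θW) ^ (-(1 : ℝ) / 2) *
      ∫ y in Iic 0, shiftedGaussian (√θ) x θW y * (hermiteNorm k).eval y := by
  rw [Jt, integral_Iic_eq_integral_Iio]
  split_ifs with hk
  · simp [hermiteNorm_of_neg hk]
  · simp_rw [eval_hermiteNorm, shiftedGaussian, mul_div_assoc', integral_div, mul_assoc,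
      integral_const_mul]
    ring

theorem HH_eq_shiftedGaussian (θ θW x : ℝ) {s : ℕ} (hs : s ≠ 0) :
    HH θ θW s x = (s : ℝ)⁻¹ * √(θW / (2 * π)) * θ ^ (((s : ℝ) - 1) / 2) *
      shiftedGaussian (√θ) x θW 0 * (hermiteNorm (s - 1)).eval 0 := by
  obtain ⟨m, rfl⟩ := Nat.exists_eq_succ_of_ne_zero hs
  rw [HH, eval_hermiteNorm, shiftedGaussian, show ((m.succ : ℕ) : ℤ) - 1 = m by omega,
    Int.toNat_natCast, Nat.factorial_succ]
  push_cast
  field_simp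
  ring_nf

/-- For `s ≥ 1`, `J̃_s(x) = (1/s)[(θ^W − θ) J̃_{s−2}(x) + x J̃_{s−1}(x)] − H_s(x)`. -/
theorem Jt_recursion (θ θW : ℝ) (hθ : 0 < θ) (hθW : 0 < θW) (s : ℕ) (hs : 1 ≤ s)
    (x : ℝ) :
    Jt θ θW s x = (1 / (s : ℝ)) *
        ((θW - θ) * Jt θ θW ((s : ℤ) - 2) x + x * Jt θ θW ((s : ℤ) - 1) x)
      - HH θ θW s x := by
  have hrec := integral_Iic_shiftedGaussian_mul_hermiteNorm_recurrence (x := x)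
    (Real.sqrt_pos.2 hθ).ne' hθW s 0
  rw [Real.sq_sqrt hθ.le, Int.cast_natCast] at hrec
  rw [Jt_eq_integral_shiftedGaussian, Jt_eq_integral_shiftedGaussian,
    Jt_eq_integral_shiftedGaussian, HH_eq_shiftedGaussian _ _ _ (by omega),
    ← mul_rpow_neg_half hθW (by positivity)]
  have hpow : ∀ e : ℝ, θ ^ (((s : ℝ) - 1) / 2 + e) = θ ^ (((s : ℝ) - 1) / 2) * θ ^ e :=
    fun e => Real.rpow_add hθ _ _
  rw [show (((s : ℤ) : ℝ) + 1) / 2 = ((s : ℝ) - 1) / 2 + 1 by push_cast; ring,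
    show ((((s : ℤ) - 1 : ℤ) : ℝ) + 1) / 2 = ((s : ℝ) - 1) / 2 + 1 / 2 by push_cast; ring,
    show ((((s : ℤ) - 2 : ℤ) : ℝ) + 1) / 2 = ((s : ℝ) - 1) / 2 by push_cast; ring,
    hpow, hpow, Real.rpow_one, ← Real.sqrt_eq_rpow]
  have hs0 : (s : ℝ) ≠ 0 := by positivity
  -- `field_simp` cancels the common factor `θ ^ ((s - 1) / 2) * (2πθW) ^ (-1/2) / s`
  field_simp
  linear_combination hrec
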